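/- For every k \in \N_0 and real \eta > 0, \xi \in \R: \sum_{n \in \Z} n^k exp(-\pi n^2/\eta^2 + 2\pi i \xi n/\eta^2) = ((-1)^{k/2} \eta^{k+1} / (2^k \pi^{k/2})) \Theta_k(\sqrt{\pi}\eta, \sqrt{\pi}\xi/\eta), where \Theta_k(u,v) = \sum_{n \in \Z} H_k(un+v) exp(-(un+v)^2) and H_k is the k-th Hermite polynomial. Here (-1)^{k/2} is interpreted as i^k, i.e., the stated real-valued identity holds after multiplying through appropriately; equivalently \sum_{n \in \Z} n^k exp(-\pi n^2/\eta^2 + 2\pi i \xi n/\eta^2) = (i^k \eta^{k+1} / (2^k \pi^{k/2})) \Theta_k(\sqrt{\pi}\eta, \sqrt{\pi}\xi/\eta) as complex numbers. -/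

import Mathlib

/-!
Differentiating in `ξ` raises `k` by one on both sides. On the left this brings down the factor
`2πin/η²`; on the right it uses `(H_k(x) e^{-x²})' = -H_{k+1}(x) e^{-x²}`, which follows from
`H_k' = 2k H_{k-1}` and the three-term recurrence. Gaussian decay of all the series justifies
differentiating termwise, so the identity for `k + 1` follows from the one for `k`. The case
`k = 0` is Jacobi's theta transformation, i.e. Poisson summation for a Gaussian.
-/

/-- The `k`-th physicists' Hermite polynomial. -/
noncomputable def hermiteH (k : ℕ) (x : ℝ) : ℝ :=
  (k.factorial : ℝ) * ∑ m ∈ Finset.range (k / 2 + 1),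
    (-1 : ℝ) ^ m * (2 * x) ^ (k - 2 * m) /
      ((m.factorial : ℝ) * ((k - 2 * m).factorial : ℝ))

/-- `Θ_k(u, v) = ∑_{n ∈ ℤ} H_k(un + v) e^{-(un+v)²}`. -/
noncomputable def ThetaH (k : ℕ) (u v : ℝ) : ℝ :=
  ∑' n : ℤ, hermiteH k (u * n + v) * Real.exp (-(u * n + v) ^ 2)

open Real Finset Nat

/- `k.descFactorial (2 * m) = k! / (k - 2m)!` vanishes for `2 * m > k`, so these sums may run
over any range, and the truncated exponent `k - 2 * m` is harmless there. -/
lemma hermiteH_eq_sum_descFactorial (k : ℕ) {N : ℕ} (hN : k / 2 < N) (x : ℝ) :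
    hermiteH k x = ∑ m ∈ range N,
      (-1) ^ m * ((k.descFactorial (2 * m) : ℝ) / m !) * (2 * x) ^ (k - 2 * m) := by
  rw [hermiteH, mul_sum, ← sum_subset (range_subset_range.mpr hN)]
  · refine sum_congr rfl fun m hm => ?_
    rw [← Nat.factorial_mul_descFactorial (show 2 * m ≤ k by grind)]
    push_cast
    field_simp
  · intro m _ hm
    rw [Nat.descFactorial_eq_zero_iff_lt.mpr (by grind)]
    simp

lemma hermiteH_zero (x : ℝ) : hermiteH 0 x = 1 := by
  simp [hermiteH]

lemma hermiteH_one (x : ℝ) : hermiteH 1 x = 2 * x := by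
  simp [hermiteH]

lemma hasDerivAt_hermiteH_succ (k : ℕ) (x : ℝ) :
    HasDerivAt (hermiteH (k + 1)) (2 * (k + 1) * hermiteH k x) x := by
  rw [funext (hermiteH_eq_sum_descFactorial (k + 1) (N := k + 1) (by omega)),
    hermiteH_eq_sum_descFactorial k (N := k + 1) (by omega), mul_sum]
  refine HasDerivAt.fun_sum fun m _ => ?_
  refine (((hasDerivAt_pow _ (2 * x)).comp x ((hasDerivAt_id x).const_mul 2)).const_mul
    ((-1) ^ m * (((k + 1).descFactorial (2 * m) : ℝ) / m !))).congr_deriv ?_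
  have hD : ((k + 1 - 2 * m : ℕ) : ℝ) * (k + 1).descFactorial (2 * m)
      = (k + 1) * k.descFactorial (2 * m) := by
    exact_mod_cast (Nat.descFactorial_succ _ _).symm.trans (Nat.succ_descFactorial_succ _ _)
  rw [show k + 1 - 2 * m - 1 = k - 2 * m by omega]
  simp only [mul_one]
  linear_combination (2 * (-1) ^ m * (2 * x) ^ (k - 2 * m) / m !) * hD

lemma mul_natCast_mul_pow_pred {R : Type*} [CommSemiring R] (y : R) (j : ℕ) :
    y * (j * y ^ (j - 1)) = j * y ^ j := by
  cases j with
  | zero => simp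
  | succ j => push_cast; ring

lemma hermiteH_add_two (k : ℕ) (x : ℝ) :
    hermiteH (k + 2) x = 2 * x * hermiteH (k + 1) x - 2 * (k + 1) * hermiteH k x := by
  rw [hermiteH_eq_sum_descFactorial (k + 2) (N := k + 2) (by omega),
    hermiteH_eq_sum_descFactorial (k + 1) (N := k + 2) (by omega),
    hermiteH_eq_sum_descFactorial k (N := k + 1) (by omega), sum_range_succ' _ (k + 1),
    sum_range_succ' _ (k + 1), mul_add, mul_sum, mul_sum, add_sub_right_comm, ← sum_sub_distrib]
  congr 1
  · refine sum_congr rfl fun m _ => ?_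
    have hD₂ : ((k + 2).descFactorial (2 * (m + 1)) : ℝ)
        = (k + 2) * (k + 1) * k.descFactorial (2 * m) := by
      rw [mul_add_one, Nat.succ_descFactorial_succ, Nat.succ_descFactorial_succ]
      push_cast; ring
    have hD₁ : ((k + 1).descFactorial (2 * (m + 1)) : ℝ)
        = (k + 1) * (k - 2 * m : ℕ) * k.descFactorial (2 * m) := by
      rw [mul_add_one, Nat.succ_descFactorial_succ, Nat.descFactorial_succ]
      push_cast; ring
    rw [hD₂, hD₁, show k + 2 - 2 * (m + 1) = k - 2 * m by omega,
      show k + 1 - 2 * (m + 1) = k - 2 * m - 1 by omega, Nat.factorial_succ]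
    by_cases hm : 2 * m ≤ k
    · have := mul_natCast_mul_pow_pred (2 * x) (k - 2 * m)
      push_cast [Nat.cast_sub hm] at this ⊢
      field_simp
      linear_combination -(-1) ^ (m + 1) * (k.descFactorial (2 * m) : ℝ) * this
    · simp [Nat.descFactorial_eq_zero_iff_lt.mpr (not_le.mp hm)]
  · simp; ring

lemma hasDerivAt_hermiteH (k : ℕ) (x : ℝ) :
    HasDerivAt (hermiteH k) (2 * x * hermiteH k x - hermiteH (k + 1) x) x := by
  cases k with
  | zero =>
    rw [funext hermiteH_zero, hermiteH_one]
    simpa using hasDerivAt_const x (1 : ℝ)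
  | succ k =>
    rw [hermiteH_add_two]
    simpa using hasDerivAt_hermiteH_succ k x

lemma hasDerivAt_hermiteH_mul_gaussian (k : ℕ) (x : ℝ) :
    HasDerivAt (fun y => hermiteH k y * rexp (-y ^ 2))
      (-(hermiteH (k + 1) x * rexp (-x ^ 2))) x := by
  have hexp : HasDerivAt (fun y : ℝ => rexp (-y ^ 2)) (rexp (-x ^ 2) * -(2 * x)) x := by
    simpa using ((hasDerivAt_pow 2 x).neg).exp
  exact ((hasDerivAt_hermiteH k x).mul hexp).congr_deriv (by ring)

lemma abs_hermiteH_le (k : ℕ) (x : ℝ) :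
    |hermiteH k x| ≤ k ! * (k / 2 + 1 : ℕ) * rexp (2 * |x|) := by
  have hterm : ∀ m ∈ range (k / 2 + 1), |(-1 : ℝ) ^ m * (2 * x) ^ (k - 2 * m) /
      ((m ! : ℝ) * ((k - 2 * m) ! : ℝ))| ≤ rexp (2 * |x|) := by
    intro m _
    rw [abs_div, abs_of_pos (by positivity : (0 : ℝ) < m ! * (k - 2 * m) !), abs_mul, abs_pow,
      abs_pow, abs_mul, abs_two, abs_neg, abs_one, one_pow, one_mul]
    calc (2 * |x|) ^ (k - 2 * m) / (m ! * (k - 2 * m) !)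
        ≤ (2 * |x|) ^ (k - 2 * m) / (k - 2 * m) ! := by
          gcongr
          exact le_mul_of_one_le_left (by positivity) (mod_cast Nat.one_le_of_lt (factorial_pos m))
      _ ≤ rexp (2 * |x|) := Real.pow_div_factorial_le_exp _ (by positivity) _
  calc |hermiteH k x|
      ≤ k ! * ∑ m ∈ range (k / 2 + 1), |(-1 : ℝ) ^ m * (2 * x) ^ (k - 2 * m) /
          ((m ! : ℝ) * ((k - 2 * m) ! : ℝ))| := by
        rw [hermiteH, abs_mul, Nat.abs_cast]
        gcongr
        exact abs_sum_le_sum_abs _ _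
    _ ≤ k ! * ((k / 2 + 1 : ℕ) * rexp (2 * |x|)) := by
        gcongr
        simpa using sum_le_card_nsmul _ _ _ hterm
    _ = _ := by ring

lemma exists_abs_hermiteH_mul_gaussian_le (k : ℕ) :
    ∃ C, ∀ x, |hermiteH k x * rexp (-x ^ 2)| ≤ C * rexp (-x ^ 2 / 2) := by
  refine ⟨k ! * (k / 2 + 1 : ℕ) * rexp 2, fun x => ?_⟩
  rw [abs_mul, Real.abs_exp, mul_assoc _ (rexp 2), ← Real.exp_add]
  calc |hermiteH k x| * rexp (-x ^ 2)
      ≤ k ! * (k / 2 + 1 : ℕ) * rexp (2 * |x|) * rexp (-x ^ 2) := by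
        gcongr
        exact abs_hermiteH_le k x
    _ ≤ k ! * (k / 2 + 1 : ℕ) * rexp (2 + -x ^ 2 / 2) := by
        rw [mul_assoc, ← Real.exp_add]
        gcongr k ! * (k / 2 + 1 : ℕ) * ?_
        exact Real.exp_le_exp.mpr (by nlinarith [sq_nonneg (|x| - 2), sq_abs x])

lemma summable_abs_pow_mul_exp_neg_mul_sq (k : ℕ) {c : ℝ} (hc : 0 < c) :
    Summable fun n : ℤ => |(n : ℝ)| ^ k * rexp (-c * n ^ 2) := by
  convert summable_pow_mul_jacobiTheta₂_term_bound 0 (T := c / π) (by positivity) k using 3 with n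
  · simp
  · simp
    field_simp

lemma summable_exp_neg_mul_sq_affine {c u : ℝ} (hc : 0 < c) (hu : u ≠ 0) (v : ℝ) :
    Summable fun n : ℤ => rexp (-c * (u * n + v) ^ 2) := by
  refine ((summable_abs_pow_mul_exp_neg_mul_sq 0 (c := c * u ^ 2 / 2) (by positivity)).mul_left
    (rexp (c * v ^ 2))).of_nonneg_of_le (fun _ => (exp_pos _).le) fun n => ?_
  rw [pow_zero, one_mul, ← Real.exp_add, Real.exp_le_exp]
  nlinarith [mul_nonneg hc.le (sq_nonneg (u * n + 2 * v))]

lemma hasDerivAt_ThetaH (k : ℕ) {u : ℝ} (hu : u ≠ 0) (v : ℝ) :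
    HasDerivAt (ThetaH k u) (-ThetaH (k + 1) u v) v := by
  have hsum := summable_exp_neg_mul_sq_affine (c := 1 / 4) (by norm_num) hu v
  have hdom : ∀ j, ∃ C, ∀ (n : ℤ), ∀ s ∈ Metric.ball v 1,
      |hermiteH j (u * n + s) * rexp (-(u * n + s) ^ 2)|
        ≤ C * rexp (-(1 / 4) * (u * n + v) ^ 2) := by
    intro j
    obtain ⟨C, hC⟩ := exists_abs_hermiteH_mul_gaussian_le j
    have hC_nonneg : 0 ≤ C := by simpa using (abs_nonneg _).trans (hC 0)
    refine ⟨C * rexp (1 / 2), fun n s hs => (hC _).trans ?_⟩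
    rw [Metric.mem_ball, Real.dist_eq, abs_lt] at hs
    rw [mul_assoc, ← Real.exp_add]
    gcongr
    nlinarith [sq_nonneg (u * n + v + 2 * (s - v))]
  obtain ⟨C, hC⟩ := hdom (k + 1)
  obtain ⟨C₀, hC₀⟩ := hdom k
  have hderiv := hasDerivAt_tsum_of_isPreconnected (hsum.mul_left C)
    Metric.isOpen_ball (convex_ball v 1).isPreconnected
    (fun n s _ => (hasDerivAt_hermiteH_mul_gaussian k (u * n + s)).comp s
      ((hasDerivAt_id s).const_add (u * n)))
    (fun n s hs => by simpa using hC n s hs) (Metric.mem_ball_self one_pos)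
    (Summable.of_norm_bounded (hsum.mul_left C₀) fun n => hC₀ n v (Metric.mem_ball_self one_pos))
    (Metric.mem_ball_self one_pos)
  simp only [mul_one, tsum_neg] at hderiv
  exact hderiv

open scoped Complex
open Complex (I)

lemma ofReal_sqrt_pi_sq : ((√π : ℝ) : ℂ) ^ 2 = π := by
  rw [← Complex.ofReal_pow, Real.sq_sqrt pi_pos.le]

noncomputable def gaussMoment (k : ℕ) (η ξ : ℝ) : ℂ :=
  ∑' n : ℤ, (n : ℂ) ^ k * cexp (-(π : ℂ) * n ^ 2 / η ^ 2 + 2 * π * I * ξ * n / η ^ 2)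

lemma norm_gaussMoment_term (k : ℕ) (η t : ℝ) (n : ℤ) :
    ‖(n : ℂ) ^ k * cexp (-(π : ℂ) * n ^ 2 / η ^ 2 + 2 * π * I * t * n / η ^ 2)‖
      = |(n : ℝ)| ^ k * rexp (-(π / η ^ 2) * n ^ 2) := by
  rw [norm_mul, norm_pow, Complex.norm_intCast, Complex.norm_exp]
  congr 2
  simp [← Complex.ofReal_pow, ← Complex.ofReal_intCast]
  ring

lemma hasDerivAt_gaussMoment (k : ℕ) {η : ℝ} (hη : η ≠ 0) (ξ : ℝ) :
    HasDerivAt (gaussMoment k η) (2 * π * I / η ^ 2 * gaussMoment (k + 1) η ξ) ξ := by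
  have hsum := fun j => summable_abs_pow_mul_exp_neg_mul_sq j (c := π / η ^ 2) (by positivity)
  have hterm : ∀ (n : ℤ) (t : ℝ), HasDerivAt
      (fun t : ℝ => (n : ℂ) ^ k * cexp (-(π : ℂ) * n ^ 2 / η ^ 2 + 2 * π * I * t * n / η ^ 2))
      (2 * π * I / η ^ 2 * ((n : ℂ) ^ (k + 1) *
        cexp (-(π : ℂ) * n ^ 2 / η ^ 2 + 2 * π * I * t * n / η ^ 2))) t := by
    intro n t
    refine (((((hasDerivAt_id t).ofReal_comp.const_mul (2 * π * I)).mul_const (n : ℂ)).div_const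
      ((η : ℂ) ^ 2)).const_add (-(π : ℂ) * n ^ 2 / η ^ 2)).cexp.const_mul ((n : ℂ) ^ k)
      |>.congr_deriv ?_
    simp only [id, Complex.ofReal_one]
    ring
  have hbound : ∀ (n : ℤ) (t : ℝ), ‖2 * π * I / η ^ 2 * ((n : ℂ) ^ (k + 1) *
        cexp (-(π : ℂ) * n ^ 2 / η ^ 2 + 2 * π * I * t * n / η ^ 2))‖
      ≤ 2 * π / η ^ 2 * (|(n : ℝ)| ^ (k + 1) * rexp (-(π / η ^ 2) * n ^ 2)) := by
    intro n t
    rw [norm_mul, norm_gaussMoment_term]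
    simp [abs_of_pos pi_pos]
  rw [gaussMoment, ← tsum_mul_left]
  exact hasDerivAt_tsum ((hsum (k + 1)).mul_left _) hterm hbound
    (Summable.of_norm_bounded (hsum k) fun n => (norm_gaussMoment_term k η ξ n).le) ξ

lemma gaussMoment_zero {η : ℝ} (hη : 0 < η) (ξ : ℝ) :
    gaussMoment 0 η ξ = η * ThetaH 0 (√π * η) (√π * ξ / η) := by
  have ha : 0 < ((1 / η ^ 2 : ℝ) : ℂ).re := by rw [Complex.ofReal_re]; positivity
  have hroot : ((1 / η ^ 2 : ℝ) : ℂ) ^ (1 / 2 : ℂ) = ((1 / η : ℝ) : ℂ) := by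
    rw [← Complex.ofReal_ofNat, ← Complex.ofReal_one, ← Complex.ofReal_div,
      ← Complex.ofReal_cpow (by positivity), ← Real.sqrt_eq_rpow, one_div, one_div, ← inv_pow,
      Real.sqrt_sq (by positivity)]
  have hJ := Complex.tsum_exp_neg_quadratic ha (I * ξ / η ^ 2)
  have hII : I * (I * ξ / η ^ 2) = -(ξ / η ^ 2 : ℂ) := by
    rw [← mul_div_assoc, ← mul_assoc, Complex.I_mul_I, neg_one_mul, neg_div]
  rw [hroot, hII] at hJ
  simp only [gaussMoment, ThetaH, hermiteH_zero, pow_zero, one_mul, Complex.ofReal_tsum,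
    Complex.ofReal_exp]
  convert hJ using 1
  · refine tsum_congr fun n => ?_
    push_cast
    ring_nf
  · rw [← (Equiv.neg ℤ).tsum_eq]
    have hη' : (η : ℂ) ≠ 0 := Complex.ofReal_ne_zero.mpr hη.ne'
    push_cast
    rw [one_div_one_div]
    congr 1
    refine tsum_congr fun n => ?_
    congr 1
    rw [Equiv.neg_apply, Int.cast_neg, ← ofReal_sqrt_pi_sq]
    field_simp
    ring

lemma gaussMoment_eq_mul_ThetaH (k : ℕ) {η : ℝ} (hη : 0 < η) (ξ : ℝ) :
    gaussMoment k η ξ = I ^ k * η ^ (k + 1) / (2 * √π) ^ k * ThetaH k (√π * η) (√π * ξ / η) := by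
  induction k generalizing ξ with
  | zero => simpa using gaussMoment_zero hη ξ
  | succ k ih =>
    have hT : HasDerivAt (fun t => ThetaH k (√π * η) (√π * t / η))
        (-ThetaH (k + 1) (√π * η) (√π * ξ / η) * (√π * 1 / η)) ξ :=
      (hasDerivAt_ThetaH k (by positivity) _).comp ξ (((hasDerivAt_id ξ).const_mul √π).div_const η)
    have hM := hasDerivAt_gaussMoment k hη.ne' ξ
    rw [funext ih] at hM
    have hderiv := hM.unique (hT.ofReal_comp.const_mul _)
    have hη' : (η : ℂ) ≠ 0 := Complex.ofReal_ne_zero.mpr hη.ne'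
    apply mul_left_cancel₀ (show 2 * π * I / η ^ 2 ≠ 0 by simp [pi_ne_zero, hη.ne'])
    rw [hderiv, ← ofReal_sqrt_pi_sq]
    push_cast
    field_simp
    ring_nf
    rw [Complex.I_sq]
    ring

/-- The theta–Hermite identity (Lemma 3 in [KIK08b]). -/
theorem theta_hermite_identity (k : ℕ) (η ξ : ℝ) (hη : 0 < η) :
    (∑' n : ℤ, (n : ℂ) ^ k *
        Complex.exp (-(Real.pi : ℂ) * n ^ 2 / η ^ 2 +
          2 * Real.pi * Complex.I * ξ * n / η ^ 2)) =
      (Complex.I ^ k * η ^ (k + 1) / (2 ^ k * (Real.pi : ℂ) ^ ((k : ℂ) / 2))) *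
        (ThetaH k (Real.sqrt Real.pi * η) (Real.sqrt Real.pi * ξ / η) : ℂ) := by
  have hroot : (π : ℂ) ^ ((k : ℂ) / 2) = ((√π : ℝ) : ℂ) ^ k := by
    rw [Real.sqrt_eq_rpow, Complex.ofReal_cpow pi_pos.le, div_eq_mul_one_div (k : ℂ),
      Complex.cpow_nat_mul]
    norm_num
  rw [hroot, ← mul_pow]
  exact gaussMoment_eq_mul_ThetaH k hη ξ
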